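/- arXiv:1608.01742 — 2 statements merged into one kernel-verified Lean document; each statement's English description precedes it below -/
import Mathlib

section
/- For all s > 0 and θ ∈ [0,1], one has θ²·H(s) ≤ H(θ·s), where H(u) = -½u²·log(u²) + ½u² for 0 ≤ u ≤ e⁻¹ and H(u) = (2/e)u - 1/(2e²) for u > e⁻¹. -/
/-!
The inequality says that `u ↦ H u / u ^ 2` is antitone on `(0, ∞)`. On `(0, e⁻¹]` this ratio
is `1/2 - log u`; on `[e⁻¹, ∞)` it is `2v - v²/2` with `v = (e u)⁻¹ ∈ (0, 1]`, increasing
in `v`. Both pieces equal `3/2` at `e⁻¹`, so they glue to an antitone function.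
-/

noncomputable def H (u : ℝ) : ℝ :=
  if |u| ≤ (Real.exp 1)⁻¹ then
    -(1 / 2) * u ^ 2 * Real.log (u ^ 2) + (1 / 2) * u ^ 2
  else (2 / Real.exp 1) * |u| - 1 / (2 * Real.exp 1 ^ 2)

open Real Set

lemma H_div_sq_of_le_inv_exp {u : ℝ} (hu : 0 < u) (h : u ≤ (exp 1)⁻¹) :
    H u / u ^ 2 = 1 / 2 - log u := by
  rw [H, if_pos (by rwa [abs_of_pos hu]), log_pow]
  field_simp
  ring

lemma H_div_sq_of_inv_exp_le {u : ℝ} (h : (exp 1)⁻¹ ≤ u) :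
    H u / u ^ 2 = 2 * (exp 1 * u)⁻¹ - (exp 1 * u)⁻¹ ^ 2 / 2 := by
  have hu : 0 < u := (inv_pos.2 (exp_pos 1)).trans_le h
  suffices H u = 2 / exp 1 * u - 1 / (2 * exp 1 ^ 2) by
    rw [this]
    field_simp
  rw [H, abs_of_pos hu]
  split_ifs with h'
  · -- the two branches of `H` agree at `e⁻¹`
    obtain rfl : u = (exp 1)⁻¹ := le_antisymm h' h
    rw [inv_pow, log_inv, log_pow, log_exp]
    field_simp
    ring
  · rfl

lemma antitoneOn_H_div_sq_Ioc : AntitoneOn (fun u ↦ H u / u ^ 2) (Ioc 0 (exp 1)⁻¹) := by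
  intro a ha b hb hab
  simp only
  rw [H_div_sq_of_le_inv_exp ha.1 ha.2, H_div_sq_of_le_inv_exp hb.1 hb.2]
  linarith [log_le_log ha.1 hab]

lemma antitoneOn_H_div_sq_Ici : AntitoneOn (fun u ↦ H u / u ^ 2) (Ici (exp 1)⁻¹) := by
  intro a ha b hb hab
  simp only
  rw [H_div_sq_of_inv_exp_le ha, H_div_sq_of_inv_exp_le hb]
  have hb0 : 0 < b := (inv_pos.2 (exp_pos 1)).trans_le hb
  have hea : 1 ≤ exp 1 * a := by rwa [← inv_mul_le_iff₀ (exp_pos 1), mul_one]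
  have hv : (exp 1 * a)⁻¹ ≤ 1 := inv_le_one_of_one_le₀ hea
  have hwv : (exp 1 * b)⁻¹ ≤ (exp 1 * a)⁻¹ := inv_anti₀ (by positivity) (by gcongr)
  have hw : 0 ≤ (exp 1 * b)⁻¹ := by positivity
  nlinarith [mul_nonneg (sub_nonneg.2 hwv)
    (by linarith : (0 : ℝ) ≤ 4 - (exp 1 * a)⁻¹ - (exp 1 * b)⁻¹)]

lemma antitoneOn_H_div_sq : AntitoneOn (fun u ↦ H u / u ^ 2) (Ioi 0) := by
  have he : (0 : ℝ) < (exp 1)⁻¹ := inv_pos.2 (exp_pos 1)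
  rw [← Ioc_union_Ici_eq_Ioi he]
  exact antitoneOn_H_div_sq_Ioc.union_right antitoneOn_H_div_sq_Ici (isGreatest_Ioc he) isLeast_Ici

theorem H_superhomogeneous :
    ∀ s > (0 : ℝ), ∀ θ ∈ Set.Icc (0 : ℝ) 1, θ ^ 2 * H s ≤ H (θ * s) := by
  intro s hs θ ⟨hθ0, hθ1⟩
  obtain rfl | hθ := hθ0.eq_or_lt
  · simp [H, (exp_pos 1).le]
  have hθs : 0 < θ * s := mul_pos hθ hs
  have hratio : H s / s ^ 2 ≤ H (θ * s) / (θ * s) ^ 2 :=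
    antitoneOn_H_div_sq hθs hs (mul_le_of_le_one_left hs.le hθ1)
  calc θ ^ 2 * H s = (θ * s) ^ 2 * (H s / s ^ 2) := by field_simp
    _ ≤ (θ * s) ^ 2 * (H (θ * s) / (θ * s) ^ 2) := by gcongr
    _ = H (θ * s) := by field_simp
end

section
/- Let H : ℝ → ℝ be convex with H(0) = 0, H even, H differentiable on (0,∞) with derivative h satisfying θh(s) ≤ h(θs) and ½h(s)s ≤ H(s) ≤ h(s)s for s > 0, θ ∈ [0,1]. Then for all s, t > 0 and θ ∈ (0,1]: h(s)·t ≤ θ·H(s) + (1/θ)·H(t). -/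
/-!
Put `u = t / θ`. The tangent line of the convex function `H` at `s` gives the Fenchel-type bound
`h s * u ≤ H s + H u`, because the conjugate `H*(h s) = h s * s - H s` is at most `H s` when
`h s * s ≤ 2 * H s`. The same bound `h r * r ≤ 2 * H r` makes `H r / r ^ 2` antitone, so
`θ ^ 2 * H u ≤ H (θ * u) = H t`; multiplying the first bound by `θ` finishes the proof.
-/

open Set

theorem ConvexOn.add_mul_sub_le_of_hasDerivAt {S : Set ℝ} {f : ℝ → ℝ} {f' x y : ℝ}
    (hf : ConvexOn ℝ S f) (hx : x ∈ S) (hy : y ∈ S) (hfx : HasDerivAt f f' x) :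
    f x + f' * (y - x) ≤ f y := by
  rcases lt_trichotomy x y with hxy | rfl | hyx
  · have hslope := hf.le_slope_of_hasDerivAt hx hy hxy hfx
    rw [slope_def_field, le_div_iff₀ (sub_pos.2 hxy)] at hslope
    linarith
  · simp
  · have hslope := hf.slope_le_of_hasDerivAt hy hx hyx hfx
    rw [slope_def_field, div_le_iff₀ (sub_pos.2 hyx)] at hslope
    linarith

theorem ConvexOn.mul_le_add_of_hasDerivAt {S : Set ℝ} {f : ℝ → ℝ} {f' x y : ℝ}
    (hf : ConvexOn ℝ S f) (hx : x ∈ S) (hy : y ∈ S) (hfx : HasDerivAt f f' x)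
    (hconj : f' * x ≤ 2 * f x) :
    f' * y ≤ f x + f y := by
  have := hf.add_mul_sub_le_of_hasDerivAt hx hy hfx
  linarith

theorem antitoneOn_div_sq_of_hasDerivAt {f f' : ℝ → ℝ}
    (hf : ∀ x > 0, HasDerivAt f (f' x) x) (hf' : ∀ x > 0, f' x * x ≤ 2 * f x) :
    AntitoneOn (fun x => f x / x ^ 2) (Ioi 0) := by
  have hderiv : ∀ x > 0,
      HasDerivAt (fun x => f x / x ^ 2) ((f' x * x ^ 2 - f x * (2 * x)) / (x ^ 2) ^ 2) x :=
    fun x hx => (hf x hx).div (by simpa using hasDerivAt_pow 2 x) (by positivity)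
  refine antitoneOn_of_hasDerivWithinAt_nonpos (convex_Ioi 0)
    (fun x hx => (hderiv x hx).continuousAt.continuousWithinAt)
    (fun x hx => (hderiv x (interior_subset hx)).hasDerivWithinAt) fun x hx => ?_
  rw [interior_Ioi] at hx
  have hnum : f' x * x ^ 2 - f x * (2 * x) ≤ 0 := by nlinarith [hf' x hx, mem_Ioi.1 hx]
  exact div_nonpos_of_nonpos_of_nonneg hnum (by positivity)

theorem sq_mul_le_of_hasDerivAt {f f' : ℝ → ℝ}
    (hf : ∀ x > 0, HasDerivAt f (f' x) x) (hf' : ∀ x > 0, f' x * x ≤ 2 * f x)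
    {c x : ℝ} (hc : c ∈ Ioc 0 1) (hx : 0 < x) :
    c ^ 2 * f x ≤ f (c * x) := by
  obtain ⟨hc0, hc1⟩ := hc
  have hcx : 0 < c * x := mul_pos hc0 hx
  have hanti := antitoneOn_div_sq_of_hasDerivAt hf hf' hcx hx (mul_le_of_le_one_left hx.le hc1)
  rw [div_le_div_iff₀ (by positivity) (by positivity), mul_pow] at hanti
  nlinarith [pow_pos hx 2]

theorem abstract_young_inequality_general (H h : ℝ → ℝ)
    (hconv : ConvexOn ℝ Set.univ H)
    (hderiv : ∀ s > (0 : ℝ), HasDerivAt H (h s) s)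
    (hbound : ∀ s > (0 : ℝ), (1 / 2) * h s * s ≤ H s ∧ H s ≤ h s * s) :
    ∀ s > (0 : ℝ), ∀ t > (0 : ℝ), ∀ θ ∈ Set.Ioc (0 : ℝ) 1,
      h s * t ≤ θ * H s + (1 / θ) * H t := by
  have hconj : ∀ r > (0 : ℝ), h r * r ≤ 2 * H r := fun r hr => by linarith [(hbound r hr).1]
  intro s hs t ht θ hθ
  have hθ0 : 0 < θ := hθ.1
  set u := t / θ
  have hθu : θ * u = t := mul_div_cancel₀ t hθ0.ne'
  have fenchel : h s * u ≤ H s + H u :=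
    hconv.mul_le_add_of_hasDerivAt trivial trivial (hderiv s hs) (hconj s hs)
  have growth : θ ^ 2 * H u ≤ H t :=
    hθu ▸ sq_mul_le_of_hasDerivAt hderiv hconj hθ (div_pos ht hθ0)
  calc h s * t = θ * (h s * u) := by rw [← hθu]; ring
    _ ≤ θ * (H s + H u) := by gcongr
    _ = θ * H s + (1 / θ) * (θ ^ 2 * H u) := by field_simp
    _ ≤ θ * H s + (1 / θ) * H t := by gcongr

theorem abstract_young_inequality (H h : ℝ → ℝ)
    (hconv : ConvexOn ℝ Set.univ H) (hH0 : H 0 = 0)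
    (heven : ∀ x : ℝ, H (-x) = H x)
    (hderiv : ∀ s > (0 : ℝ), HasDerivAt H (h s) s)
    (hhom : ∀ s > (0 : ℝ), ∀ θ ∈ Set.Icc (0 : ℝ) 1, θ * h s ≤ h (θ * s))
    (hbound : ∀ s > (0 : ℝ), (1 / 2) * h s * s ≤ H s ∧ H s ≤ h s * s) :
    ∀ s > (0 : ℝ), ∀ t > (0 : ℝ), ∀ θ ∈ Set.Ioc (0 : ℝ) 1,
      h s * t ≤ θ * H s + (1 / θ) * H t :=
  abstract_young_inequality_general H h hconv hderiv hbound
end
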